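/- Let Ω ⊂ ℝⁿ be a bounded measurable set, let F ∈ L²(ℝⁿ) satisfy F ≥ 0 a.e. and ∫_{ℝⁿ} F dx = 1, and let p ≥ 1 be a real exponent. If φ_k, φ̄ are measurable functions on Ω with 0 ≤ φ_k ≤ 1 and 0 ≤ φ̄ ≤ 1 a.e., and φ_k → φ̄ weakly in L²(Ω), then 0 ≤ (F∗φ_k)(x) ≤ 1 for all x, and the p-th powers of the filtered densities converge uniformly on Ω: sup_{x∈Ω} |((F∗φ_k)(x))^p − ((F∗φ̄)(x))^p| → 0 as k → ∞. -/

import Mathlib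

/-!
Approximating `F` in `L¹` by a continuous compactly supported `G` shows that the filtered
densities `F ∗ u` with `‖u‖ ≤ 1` on `Ω` are uniformly equicontinuous: `F ∗ u` is within
`‖F - G‖₁` of `G ∗ u`, whose modulus of continuity is that of `G` times `|Ω|`.
Testing the weak convergence against `F (x - ·) ∈ L²(Ω)` gives pointwise convergence, and
Arzelà–Ascoli on the compact set `closure Ω` turns equicontinuity plus pointwise convergence
into uniform convergence. Since all values lie in `[0, 1]`, where `t ↦ t ^ p` is uniformly
continuous, the powers converge uniformly as well.
-/

open MeasureTheory Filter Set Topology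

theorem IsCompact.tendstoUniformlyOn_of_equicontinuousOn {X α ι : Type*} [TopologicalSpace X]
    [UniformSpace α] {F : ι → X → α} {f : X → α} {l : Filter ι} {K : Set X} (hK : IsCompact K)
    (hF : EquicontinuousOn F K) (hlim : ∀ x ∈ K, Tendsto (F · x) l (𝓝 (f x))) :
    TendstoUniformlyOn F f l K := by
  have key := (EquicontinuousOn.tendsto_uniformOnFun_iff_pi' (𝔖 := {K}) (by simpa)
    (by simpa) l f).2 (by
      rw [sUnion_singleton, tendsto_pi_nhds]
      exact fun x => hlim x x.2)
  exact UniformOnFun.tendsto_iff_tendstoUniformlyOn.1 key K rfl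

theorem norm_le_one_of_mem_Icc {t : ℝ} (ht : t ∈ Icc 0 1) : ‖t‖ ≤ 1 := by
  rw [Real.norm_of_nonneg ht.1]
  exact ht.2

noncomputable def setConv {E : Type*} [Sub E] [MeasurableSpace E] (μ : Measure E) (Ω : Set E)
    (H u : E → ℝ) (x : E) : ℝ :=
  ∫ y in Ω, H (x - y) * u y ∂μ

section SetConv

variable {E : Type*} [NormedAddCommGroup E] [MeasurableSpace E] [BorelSpace E]
  {μ : Measure E} [μ.IsAddLeftInvariant] [μ.IsNegInvariant] {Ω : Set E} {F G u : E → ℝ}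

theorem integrable_comp_sub_mul (hF : Integrable F μ) (hu : AEStronglyMeasurable u (μ.restrict Ω))
    (hu1 : ∀ᵐ y ∂μ.restrict Ω, ‖u y‖ ≤ 1) (x : E) :
    Integrable (fun y => F (x - y) * u y) (μ.restrict Ω) :=
  (hF.comp_sub_left x).restrict.mul_bdd hu hu1

theorem setConv_sub (hF : Integrable F μ) (hG : Integrable G μ)
    (hu : AEStronglyMeasurable u (μ.restrict Ω)) (hu1 : ∀ᵐ y ∂μ.restrict Ω, ‖u y‖ ≤ 1) (x : E) :
    setConv μ Ω (F - G) u x = setConv μ Ω F u x - setConv μ Ω G u x := by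
  simp only [setConv, Pi.sub_apply, sub_mul]
  have h1 := integrable_comp_sub_mul hF hu hu1 x
  have h2 := integrable_comp_sub_mul hG hu hu1 x
  exact integral_sub h1 h2

theorem abs_setConv_le (hF : Integrable F μ) (hu1 : ∀ᵐ y ∂μ.restrict Ω, ‖u y‖ ≤ 1) (x : E) :
    |setConv μ Ω F u x| ≤ ∫ z, |F z| ∂μ := by
  have hFx : Integrable (fun y => |F (x - y)|) μ := (hF.comp_sub_left x).abs
  calc |setConv μ Ω F u x| ≤ ∫ y in Ω, |F (x - y)| ∂μ := by
        rw [← Real.norm_eq_abs]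
        refine norm_integral_le_of_norm_le hFx.restrict ?_
        filter_upwards [hu1] with y hy
        rw [norm_mul, Real.norm_eq_abs]
        exact mul_le_of_le_one_right (abs_nonneg _) hy
    _ ≤ ∫ y, |F (x - y)| ∂μ := setIntegral_le_integral hFx (.of_forall fun _ => abs_nonneg _)
    _ = ∫ z, |F z| ∂μ := integral_sub_left_eq_self (fun z => |F z|) μ x

theorem abs_setConv_sub_setConv_le (hΩ : μ Ω < ⊤) (hG : Integrable G μ)
    (hu : AEStronglyMeasurable u (μ.restrict Ω)) (hu1 : ∀ᵐ y ∂μ.restrict Ω, ‖u y‖ ≤ 1)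
    {δ η : ℝ} (hGδ : ∀ z z', dist z z' < δ → dist (G z) (G z') < η) {x x' : E}
    (hxx' : dist x x' < δ) :
    |setConv μ Ω G u x - setConv μ Ω G u x'| ≤ η * μ.real Ω := by
  rw [setConv, setConv, ← integral_sub (integrable_comp_sub_mul hG hu hu1 x)
    (integrable_comp_sub_mul hG hu hu1 x'), ← Real.norm_eq_abs]
  refine norm_setIntegral_le_of_norm_le_const_ae hΩ ?_
  filter_upwards [hu1] with y hy
  have hGy : ‖G (x - y) - G (x' - y)‖ ≤ η :=
    (hGδ _ _ (by rwa [dist_sub_right])).le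
  rw [← sub_mul, norm_mul]
  exact (mul_le_of_le_one_right (norm_nonneg _) hy).trans hGy

theorem setConv_mem_Icc (hF : Integrable F μ) (hF0 : ∀ᵐ z ∂μ, 0 ≤ F z)
    (hu : ∀ᵐ y ∂μ.restrict Ω, u y ∈ Icc 0 1) (x : E) :
    setConv μ Ω F u x ∈ Icc 0 (∫ z, F z ∂μ) := by
  have hFx : ∀ᵐ y ∂μ, 0 ≤ F (x - y) :=
    (Measure.measurePreserving_sub_left μ x).quasiMeasurePreserving.ae hF0
  have hu1 : ∀ᵐ y ∂μ.restrict Ω, ‖u y‖ ≤ 1 := hu.mono fun _ => norm_le_one_of_mem_Icc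
  have habs : ∫ z, |F z| ∂μ = ∫ z, F z ∂μ :=
    integral_congr_ae (hF0.mono fun z hz => abs_of_nonneg hz)
  constructor
  · refine integral_nonneg_of_ae ?_
    filter_upwards [ae_restrict_of_ae hFx, hu] with y hFy hy
    exact mul_nonneg hFy hy.1
  · exact (le_abs_self _).trans (habs ▸ abs_setConv_le hF hu1 x)

variable [WeaklyLocallyCompactSpace E] [μ.Regular]

theorem uniformEquicontinuous_setConv (hΩ : μ Ω < ⊤) (hF : Integrable F μ) {ι : Type*}
    {u : ι → E → ℝ} (hu : ∀ i, AEStronglyMeasurable (u i) (μ.restrict Ω))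
    (hu1 : ∀ i, ∀ᵐ y ∂μ.restrict Ω, ‖u i y‖ ≤ 1) :
    UniformEquicontinuous fun i => setConv μ Ω F (u i) := by
  rw [Metric.uniformEquicontinuous_iff]
  intro ε hε
  obtain ⟨G, hGsupp, hFG, hGcont, hG⟩ :=
    hF.exists_hasCompactSupport_integral_sub_le (ε := ε / 4) (by positivity)
  set η := ε / (4 * (μ.real Ω + 1))
  have hη : η * μ.real Ω ≤ ε / 4 := by
    rw [div_mul_eq_mul_div, div_le_div_iff₀ (by positivity) (by positivity)]
    nlinarith [measureReal_nonneg (μ := μ) (s := Ω)]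
  obtain ⟨δ, hδ, hGδ⟩ := Metric.uniformContinuous_iff.1
    (hGsupp.uniformContinuous_of_continuous hGcont) η (by positivity)
  refine ⟨δ, hδ, fun x x' hxx' i => ?_⟩
  have hFGx := abs_setConv_le (hF.sub hG) (hu1 i) x
  have hFGx' := abs_setConv_le (hF.sub hG) (hu1 i) x'
  rw [setConv_sub hF hG (hu i) (hu1 i)] at hFGx hFGx'
  have hGxx' := abs_setConv_sub_setConv_le hΩ hG (hu i) (hu1 i) hGδ hxx'
  rw [Real.dist_eq]
  calc |setConv μ Ω F (u i) x - setConv μ Ω F (u i) x'|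
      = |(setConv μ Ω F (u i) x - setConv μ Ω G (u i) x)
          + (setConv μ Ω G (u i) x - setConv μ Ω G (u i) x')
          - (setConv μ Ω F (u i) x' - setConv μ Ω G (u i) x')| := by congr 1; ring
    _ ≤ ε / 4 + ε / 4 + ε / 4 := by
      have hFG' : ∫ z, |(F - G) z| ∂μ ≤ ε / 4 := by
        simpa only [Pi.sub_apply, Real.norm_eq_abs] using hFG
      refine (abs_sub _ _).trans (add_le_add ((abs_add_le _ _).trans (add_le_add ?_ ?_)) ?_)
      · exact hFGx.trans hFG'
      · exact hGxx'.trans hη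
      · exact hFGx'.trans hFG'
    _ < ε := by linarith

end SetConv

theorem filtered_powers_uniform_convergence_general
    (n : ℕ) (Ω : Set (Fin n → ℝ))
    (hΩbd : Bornology.IsBounded Ω)
    (F : (Fin n → ℝ) → ℝ) (hF : MemLp F 2 volume)
    (hFpos : ∀ᵐ x : Fin n → ℝ, 0 ≤ F x)
    (hFint : ∫ x : Fin n → ℝ, F x = 1)
    (p : ℝ) (hp : 1 ≤ p)
    (φ : ℕ → (Fin n → ℝ) → ℝ) (φlim : (Fin n → ℝ) → ℝ)
    (hmem : ∀ k, MemLp (φ k) 2 (volume.restrict Ω))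
    (hbox : ∀ k, ∀ᵐ x ∂(volume.restrict Ω), 0 ≤ φ k x ∧ φ k x ≤ 1)
    (hboxlim : ∀ᵐ x ∂(volume.restrict Ω), 0 ≤ φlim x ∧ φlim x ≤ 1)
    (hweak : ∀ g : (Fin n → ℝ) → ℝ, MemLp g 2 (volume.restrict Ω) →
      Tendsto (fun k => ∫ x in Ω, φ k x * g x) atTop
        (nhds (∫ x in Ω, φlim x * g x))) :
    (∀ k, ∀ x : Fin n → ℝ,
        0 ≤ (∫ y in Ω, F (x - y) * φ k y) ∧ (∫ y in Ω, F (x - y) * φ k y) ≤ 1) ∧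
    TendstoUniformlyOn
      (fun k x => (∫ y in Ω, F (x - y) * φ k y) ^ p)
      (fun x => (∫ y in Ω, F (x - y) * φlim y) ^ p) atTop Ω := by
  have hFi : Integrable F := .of_integral_ne_zero (by rw [hFint]; exact one_ne_zero)
  have hbounds : ∀ u : (Fin n → ℝ) → ℝ, (∀ᵐ y ∂volume.restrict Ω, u y ∈ Icc 0 1) →
      ∀ x, setConv volume Ω F u x ∈ Icc 0 1 :=
    fun u hu x => hFint ▸ setConv_mem_Icc hFi hFpos hu x
  refine ⟨fun k => hbounds (φ k) (hbox k), ?_⟩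
  have hequi := uniformEquicontinuous_setConv hΩbd.measure_lt_top hFi (fun k => (hmem k).1)
    fun k => (hbox k).mono fun _ => norm_le_one_of_mem_Icc
  have hconv : TendstoUniformlyOn (fun k => setConv volume Ω F (φ k))
      (setConv volume Ω F φlim) atTop Ω := by
    refine (hΩbd.isCompact_closure.tendstoUniformlyOn_of_equicontinuousOn
      (hequi.equicontinuous.equicontinuousOn _) fun x _ => ?_).mono subset_closure
    simpa only [setConv, Function.comp_def, mul_comm] using
      hweak _ ((hF.comp_measurePreserving (Measure.measurePreserving_sub_left volume x)).restrict Ω)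
  exact (isCompact_Icc.uniformContinuousOn_of_continuous
    (Real.continuous_rpow_const (by linarith)).continuousOn).comp_tendstoUniformlyOn_eventually
    (.of_forall fun k x _ => hbounds (φ k) (hbox k) x) (fun x _ => hbounds φlim hboxlim x) hconv

/-- Compactifying property of the density filter: if `0 ≤ φ_k ≤ 1` a.e.,
`φ_k ⇀ φlim` weakly in `L²(Ω)`, and `F ∈ L²(ℝⁿ)` with `F ≥ 0` a.e. and
`∫ F = 1`, then `0 ≤ F∗φ_k ≤ 1` everywhere and `(F∗φ_k)^p → (F∗φlim)^p`
uniformly on `Ω` for any real exponent `p ≥ 1`. -/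
theorem filtered_powers_uniform_convergence
    (n : ℕ) (Ω : Set (Fin n → ℝ)) (hΩmeas : MeasurableSet Ω)
    (hΩbd : Bornology.IsBounded Ω)
    (F : (Fin n → ℝ) → ℝ) (hF : MemLp F 2 volume)
    (hFpos : ∀ᵐ x : Fin n → ℝ, 0 ≤ F x)
    (hFint : ∫ x : Fin n → ℝ, F x = 1)
    (p : ℝ) (hp : 1 ≤ p)
    (φ : ℕ → (Fin n → ℝ) → ℝ) (φlim : (Fin n → ℝ) → ℝ)
    (hmem : ∀ k, MemLp (φ k) 2 (volume.restrict Ω))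
    (hlim : MemLp φlim 2 (volume.restrict Ω))
    (hbox : ∀ k, ∀ᵐ x ∂(volume.restrict Ω), 0 ≤ φ k x ∧ φ k x ≤ 1)
    (hboxlim : ∀ᵐ x ∂(volume.restrict Ω), 0 ≤ φlim x ∧ φlim x ≤ 1)
    (hweak : ∀ g : (Fin n → ℝ) → ℝ, MemLp g 2 (volume.restrict Ω) →
      Tendsto (fun k => ∫ x in Ω, φ k x * g x) atTop
        (nhds (∫ x in Ω, φlim x * g x))) :
    (∀ k, ∀ x : Fin n → ℝ,
        0 ≤ (∫ y in Ω, F (x - y) * φ k y) ∧ (∫ y in Ω, F (x - y) * φ k y) ≤ 1) ∧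
    TendstoUniformlyOn
      (fun k x => (∫ y in Ω, F (x - y) * φ k y) ^ p)
      (fun x => (∫ y in Ω, F (x - y) * φlim y) ^ p) atTop Ω :=
  filtered_powers_uniform_convergence_general n Ω hΩbd F hF hFpos hFint p hp φ φlim hmem hbox
    hboxlim hweak
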